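/- Suppose in addition that τ is exponentially distributed with rate λ₁ > 0, τ̃ is exponentially distributed with rate λ₂ > 0, and the claims Y_k are exponentially distributed with rate β > 0. Then E[X₁] = e^{λ₁ξ} [ (1/β − 1/λ₁)(1 − e^{−λ₂ξ}) + (1/β − 1/λ₂) e^{−λ₁ξ} ]; in particular the net profit condition E[X₁] < 0 holds if and only if (1/β − 1/λ₁)(1 − e^{−λ₂ξ}) + (1/β − 1/λ₂) e^{−λ₁ξ} < 0. -/

import Mathlib

open MeasureTheory ProbabilityTheory Filter Set

/-- The increment of the claim surplus process over one regenerative cycle: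
`X₁ = (Y₀ − τ̃) + 1_{τ̃ ≤ ξ} ( ∑_{k=1}^{N−1} (Y_k − τ_k^{≤ξ}) + (Y_N − τ_N^{>ξ}) )`. -/
noncomputable def cycleIncrement {Ω : Type*} (ξ : ℝ) (τt τgt : Ω → ℝ)
    (Y τle : ℕ → Ω → ℝ) (N : Ω → ℕ) (ω : Ω) : ℝ :=
  (Y 0 ω - τt ω) +
    (if τt ω ≤ ξ then
        (∑ k ∈ Finset.Icc 1 (N ω - 1), (Y k ω - τle k ω)) + (Y (N ω) ω - τgt ω)
      else 0)

/-- The family of all sources of randomness in the regenerative cycle, used to express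
their mutual independence: the claims `Y k`, the variables `τ_k^{≤ξ}`, together with
`τ̃`, `τ^{>ξ}` and (coerced to `ℝ`) the geometric variable `N`. -/
noncomputable def cycleFamily {Ω : Type*} (τt τgt : Ω → ℝ)
    (Y τle : ℕ → Ω → ℝ) (N : Ω → ℕ) : ℕ ⊕ (ℕ ⊕ Fin 3) → Ω → ℝ :=
  Sum.elim Y (Sum.elim τle
    (fun j => if j = 0 then τt else if j = 1 then τgt else fun ω => (N ω : ℝ)))

/-!
Splitting according to the value of `N`, `X₁ = X^{(N)}`, where `X^{(k)}` is the increment of a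
cycle with `N` frozen to the constant `k`. Each `X^{(k)}` is built from variables independent of
`N`, so `E X₁ = ∑ₖ P(N = k) E X^{(k)}`; the series converges because `E |X^{(k)}|` grows linearly
in `k` while `P(N = k)` decays geometrically. Given `τ̃ ≤ ξ`, the cycle with `N = k` contributes
`k - 1` pairs `Y - τ^{≤ξ}` and one pair `Y - τ^{>ξ}`; summing against the geometric weights and
using `(1 - p) E[τ | τ ≤ ξ] + p E[τ | τ > ξ] = E τ` gives
`E X₁ = E Y - E τ̃ + P(τ̃ ≤ ξ) (E Y - E τ) / p`. For exponential laws `p = e^{-λ₁ξ}`,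
`P(τ̃ ≤ ξ) = 1 - e^{-λ₂ξ}` and the means are `1/β`, `1/λ₁`, `1/λ₂`.
-/

open Real

lemma measurable_iSup_comap {Ω ι : Type*} {β : ι → Type*} {m : ∀ i, MeasurableSpace (β i)}
    (F : ∀ i, Ω → β i) {S : Set ι} (i : ι) (hi : i ∈ S) :
    Measurable[⨆ j ∈ S, (m j).comap (F j)] (F i) :=
  (comap_measurable (F i)).mono (le_iSup₂ (f := fun j (_ : j ∈ S) => (m j).comap (F j)) i hi)
    le_rfl

lemma hasSum_geometric_mul_affine {p : ℝ} (hp0 : 0 < p) (hp1 : p ≤ 1) (c d : ℝ) :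
    HasSum (fun m : ℕ => (1 - p) ^ m * p * (c * m + d)) (c * (1 - p) / p + d) := by
  have hr : ‖1 - p‖ < 1 := by
    rw [Real.norm_eq_abs, abs_lt]
    constructor <;> linarith
  have h : HasSum (fun m : ℕ => c * p * (m * (1 - p) ^ m) + d * p * (1 - p) ^ m)
      (c * p * ((1 - p) / p ^ 2) + d * p * p⁻¹) := by
    simpa only [sub_sub_cancel] using
      ((hasSum_coe_mul_geometric_of_norm_lt_one hr).mul_left (c * p)).add
        ((hasSum_geometric_of_norm_lt_one hr).mul_left (d * p))
  convert h using 1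
  · funext m
    ring
  · field_simp

namespace ProbabilityTheory

section Exponential

variable {r : ℝ}

lemma expMeasure_Iio_zero (r : ℝ) : expMeasure r (Iio 0) = 0 := by
  rw [expMeasure, gammaMeasure, withDensity_apply _ measurableSet_Iio]
  exact lintegral_gammaPDF_of_nonpos le_rfl

lemma ae_nonneg_expMeasure (r : ℝ) : ∀ᵐ x ∂expMeasure r, 0 ≤ x :=
  measure_mono_null (fun x (hx : ¬0 ≤ x) => show x ∈ Iio 0 from not_le.mp hx)
    (expMeasure_Iio_zero r)

lemma expMeasure_real_Iic (hr : 0 < r) {x : ℝ} (hx : 0 ≤ x) :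
    (expMeasure r).real (Iic x) = 1 - exp (-(r * x)) := by
  have := isProbabilityMeasure_expMeasure hr
  rw [← cdf_eq_real, cdf_expMeasure_eq hr, if_pos hx]

lemma expMeasure_real_Ioi (hr : 0 < r) {x : ℝ} (hx : 0 ≤ x) :
    (expMeasure r).real (Ioi x) = exp (-(r * x)) := by
  have := isProbabilityMeasure_expMeasure hr
  rw [← compl_Iic, probReal_compl_eq_one_sub measurableSet_Iic, expMeasure_real_Iic hr hx]
  ring

/-- Computed by the tail formula `E X = ∫₀^∞ P(X > t) dt`. -/
lemma lintegral_ofReal_expMeasure (hr : 0 < r) :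
    ∫⁻ x, ENNReal.ofReal x ∂expMeasure r = ENNReal.ofReal (1 / r) := by
  have := isProbabilityMeasure_expMeasure hr
  have htail : ∫ t in Ioi (0 : ℝ), exp (-(r * t)) = 1 / r := by
    simp_rw [← neg_mul]
    rw [integral_exp_mul_Ioi (neg_lt_zero.mpr hr)]
    simp
  rw [lintegral_eq_lintegral_meas_lt _ (ae_nonneg_expMeasure r) aemeasurable_id, ← htail,
    ofReal_integral_eq_lintegral_ofReal (by simpa using (exp_neg_integrableOn_Ioi 0 hr).integrable)
      (ae_of_all _ fun t => (exp_pos _).le)]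
  refine setLIntegral_congr_fun measurableSet_Ioi fun t ht => ?_
  rw [← expMeasure_real_Ioi hr (le_of_lt ht), ofReal_measureReal]
  rfl

lemma integrable_id_expMeasure (hr : 0 < r) : Integrable id (expMeasure r) :=
  ⟨aestronglyMeasurable_id, (hasFiniteIntegral_iff_ofReal (ae_nonneg_expMeasure r)).mpr
    (by simp [lintegral_ofReal_expMeasure hr])⟩

lemma integral_id_expMeasure (hr : 0 < r) : ∫ x, x ∂expMeasure r = 1 / r := by
  rw [integral_eq_lintegral_of_nonneg_ae (ae_nonneg_expMeasure r) aestronglyMeasurable_id,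
    lintegral_ofReal_expMeasure hr, ENNReal.toReal_ofReal (by positivity)]

variable {Ω : Type*} [MeasurableSpace Ω] {μ : Measure Ω} {X : Ω → ℝ}

lemma HasLaw.integrable_of_expMeasure (hX : HasLaw X (expMeasure r) μ) (hr : 0 < r) :
    Integrable X μ :=
  (integrable_map_measure aestronglyMeasurable_id hX.aemeasurable).mp
    (hX.map_eq ▸ integrable_id_expMeasure hr)

lemma HasLaw.integral_of_expMeasure (hX : HasLaw X (expMeasure r) μ) (hr : 0 < r) :
    ∫ ω, X ω ∂μ = 1 / r := by
  rw [hX.integral_eq, integral_id_expMeasure hr]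

end Exponential

variable {Ω : Type*} [MeasurableSpace Ω] {μ : Measure Ω}

lemma iIndepFun.indepFun_of_measurable_iSup {ι : Type*} {β : ι → Type*}
    {m : ∀ i, MeasurableSpace (β i)} {F : ∀ i, Ω → β i} (hF : iIndepFun F μ)
    (hmeas : ∀ i, Measurable (F i)) {S T : Set ι} (hST : Disjoint S T)
    {γ δ : Type*} [MeasurableSpace γ] [MeasurableSpace δ] {U : Ω → γ} {V : Ω → δ}
    (hU : Measurable[⨆ i ∈ S, (m i).comap (F i)] U)
    (hV : Measurable[⨆ i ∈ T, (m i).comap (F i)] V) : IndepFun U V μ := by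
  rw [IndepFun_iff_Indep]
  exact indep_of_indep_of_le_right (indep_of_indep_of_le_left
    (indep_iSup_of_disjoint (fun i => (hmeas i).comap_le) hF.iIndep hST)
    hU.comap_le) hV.comap_le

lemma IndepFun.integral_indicator_preimage {β : Type*} [MeasurableSpace β] {X : Ω → β}
    {Y : Ω → ℝ} (hXY : IndepFun X Y μ) (hX : Measurable X) (hY : AEStronglyMeasurable Y μ)
    {s : Set β} (hs : MeasurableSet s) :
    ∫ ω, (X ⁻¹' s).indicator Y ω ∂μ = μ.real (X ⁻¹' s) * ∫ ω, Y ω ∂μ := by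
  have hφ : Measurable (s.indicator (1 : β → ℝ)) := measurable_one.indicator hs
  have hdecomp : (X ⁻¹' s).indicator Y = fun ω => s.indicator 1 (X ω) * Y ω := by
    ext ω
    by_cases h : X ω ∈ s <;> simp [h]
  have h := (hXY.comp hφ measurable_id).integral_fun_mul_eq_mul_integral
    (hφ.comp hX).aestronglyMeasurable hY
  simp only [Function.comp_apply, id] at h
  rw [hdecomp, h, ← integral_indicator_one (hX hs)]
  rfl

lemma hasSum_integral_comp_of_indepFun {ι : Type*} [Countable ι] [MeasurableSpace ι]
    [MeasurableSingletonClass ι] {N : Ω → ι} (hN : Measurable N) {X : ι → Ω → ℝ}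
    (hX : ∀ k, Integrable (X k) μ) (hind : ∀ k, IndepFun N (X k) μ)
    (hsum : Summable fun k => μ.real (N ⁻¹' {k}) * ∫ ω, ‖X k ω‖ ∂μ) :
    HasSum (fun k => μ.real (N ⁻¹' {k}) * ∫ ω, X k ω ∂μ) (∫ ω, X (N ω) ω ∂μ) := by
  have hdecomp : (fun ω => X (N ω) ω) = fun ω => ∑' k, (N ⁻¹' {k}).indicator (X k) ω := by
    ext ω
    rw [tsum_eq_single (N ω) fun k hk =>
      indicator_of_notMem (show ω ∉ N ⁻¹' {k} from fun h => hk (Eq.symm h)) (X k)]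
    simp
  have hnorm : ∀ k, ∫ ω, ‖(N ⁻¹' {k}).indicator (X k) ω‖ ∂μ
      = μ.real (N ⁻¹' {k}) * ∫ ω, ‖X k ω‖ ∂μ := fun k => by
    simp_rw [norm_indicator_eq_indicator_norm]
    exact ((hind k).comp measurable_id measurable_norm).integral_indicator_preimage hN
      (hX k).norm.1 (measurableSet_singleton k)
  have hF := hasSum_integral_of_summable_integral_norm
    (fun k => (hX k).indicator (hN (measurableSet_singleton k))) (by simpa only [hnorm] using hsum)
  rw [hdecomp]
  simpa only [fun k => (hind k).integral_indicator_preimage hN (hX k).1 (measurableSet_singleton k)]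
    using hF

lemma measureReal_preimage_singleton_of_geometric [IsProbabilityMeasure μ] {N : Ω → ℕ}
    (hN : Measurable N) {p : ℝ} (hp0 : 0 < p) (hp1 : p ≤ 1)
    (hlaw : ∀ k : ℕ, 1 ≤ k → μ {ω | N ω = k} = ENNReal.ofReal ((1 - p) ^ (k - 1) * p)) :
    μ.real (N ⁻¹' {0}) = 0 ∧ ∀ m : ℕ, μ.real (N ⁻¹' {m + 1}) = (1 - p) ^ m * p := by
  have hweight : ∀ m : ℕ, 0 ≤ (1 - p) ^ m * p :=
    fun m => mul_nonneg (pow_nonneg (by linarith) m) hp0.le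
  have hsucc : ∀ m : ℕ, μ (N ⁻¹' {m + 1}) = ENNReal.ofReal ((1 - p) ^ m * p) := fun m => by
    have h := hlaw (m + 1) (Nat.le_add_left 1 m)
    rwa [add_tsub_cancel_right] at h
  have hall : ∑' k, μ (N ⁻¹' {k}) = 1 := by
    have := tsum_measure_preimage_singleton (μ := μ) countable_univ
      (fun k _ => hN (measurableSet_singleton k))
    rwa [tsum_univ (f := fun k => μ (N ⁻¹' {k})), preimage_univ, measure_univ] at this
  have hone : ∑' m : ℕ, μ (N ⁻¹' {m + 1}) = 1 := by
    have h := hasSum_geometric_mul_affine hp0 hp1 0 1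
    simp only [zero_mul, zero_div, zero_add, mul_one] at h
    rw [tsum_congr hsucc, ← ENNReal.ofReal_tsum_of_nonneg hweight h.summable, h.tsum_eq,
      ENNReal.ofReal_one]
  rw [tsum_eq_zero_add' ENNReal.summable, hone] at hall
  refine ⟨by simp [measureReal_def, by simpa using hall], fun m => ?_⟩
  rw [measureReal_def, hsucc, ENNReal.toReal_ofReal (hweight m)]

lemma _root_.MeasureTheory.Integrable.cond {E : Type*} [NormedAddCommGroup E] {f : Ω → E}
    (hf : Integrable f μ) (s : Set Ω) : Integrable f μ[|s] := by
  rcases eq_or_ne (μ s) 0 with hs | hs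
  · rw [cond_eq_zero_of_meas_eq_zero hs]
    exact integrable_zero_measure
  · exact hf.restrict.smul_measure (ENNReal.inv_ne_top.mpr hs)

lemma measureReal_mul_integral_cond [IsFiniteMeasure μ] (f : Ω → ℝ) (s : Set Ω) :
    μ.real s * ∫ ω, f ω ∂μ[|s] = ∫ ω in s, f ω ∂μ := by
  rcases eq_or_ne (μ s) 0 with hs | hs
  · simp [Measure.real, hs, Measure.restrict_eq_zero.mpr hs]
  have hs' : μ.real s ≠ 0 := (measureReal_ne_zero_iff (measure_ne_top μ s)).mpr hs
  rw [cond, integral_smul_measure, ENNReal.toReal_inv, smul_eq_mul, ← measureReal_def,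
    mul_inv_cancel_left₀ hs']

lemma measureReal_mul_integral_cond_add_compl [IsFiniteMeasure μ] {f : Ω → ℝ}
    (hf : Integrable f μ) {s : Set Ω} (hs : MeasurableSet s) :
    μ.real s * ∫ ω, f ω ∂μ[|s] + μ.real sᶜ * ∫ ω, f ω ∂μ[|sᶜ] = ∫ ω, f ω ∂μ := by
  rw [measureReal_mul_integral_cond, measureReal_mul_integral_cond, integral_add_compl hs hf]

end ProbabilityTheory

noncomputable def cycleSum {Ω : Type*} (τgt : Ω → ℝ) (Y τle : ℕ → Ω → ℝ) (k : ℕ) (ω : Ω) : ℝ :=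
  ∑ j ∈ Finset.Icc 1 (k - 1), (Y j ω - τle j ω) + (Y k ω - τgt ω)

section Cycle

variable {Ω : Type*} {ξ : ℝ} {τ τt τgt : Ω → ℝ} {Y τle : ℕ → Ω → ℝ} {N : Ω → ℕ}

lemma cycleIncrement_eq (ω : Ω) :
    cycleIncrement ξ τt τgt Y τle N ω
      = Y 0 ω - τt ω + (τt ⁻¹' Iic ξ).indicator (cycleSum τgt Y τle (N ω)) ω := by
  by_cases h : τt ω ≤ ξ <;> simp [cycleIncrement, cycleSum, h]

lemma measurable_cycleSum {m : MeasurableSpace Ω} (hY : ∀ j, Measurable[m] (Y j))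
    (hτle : ∀ j, Measurable[m] (τle j)) (hτgt : Measurable[m] τgt) (k : ℕ) :
    Measurable[m] (cycleSum τgt Y τle k) :=
  (Finset.measurable_sum _ fun j _ => (hY j).sub (hτle j)).add ((hY k).sub hτgt)

lemma measurable_cycleIncrement_const {m : MeasurableSpace Ω} (hY : ∀ j, Measurable[m] (Y j))
    (hτle : ∀ j, Measurable[m] (τle j)) (hτt : Measurable[m] τt) (hτgt : Measurable[m] τgt)
    (k : ℕ) : Measurable[m] (fun ω => cycleIncrement ξ τt τgt Y τle (fun _ => k) ω) := by
  simp_rw [cycleIncrement_eq]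
  exact ((hY 0).sub hτt).add
    ((measurable_cycleSum hY hτle hτgt k).indicator (hτt measurableSet_Iic))

variable [MeasurableSpace Ω] {μ : Measure Ω}

lemma measurable_cycleFamily (hτt : Measurable τt) (hτgt : Measurable τgt)
    (hY : ∀ j, Measurable (Y j)) (hτle : ∀ j, Measurable (τle j)) (hN : Measurable N) :
    ∀ i, Measurable (cycleFamily τt τgt Y τle N i)
  | .inl j => hY j
  | .inr (.inl j) => hτle j
  | .inr (.inr 0) => hτt
  | .inr (.inr 1) => hτgt
  | .inr (.inr 2) => (measurable_from_top : Measurable (Nat.cast : ℕ → ℝ)).comp hN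

lemma indepFun_cycleSum (hindep : iIndepFun (cycleFamily τt τgt Y τle N) μ)
    (hmeas : ∀ i, Measurable (cycleFamily τt τgt Y τle N i)) (k : ℕ) :
    IndepFun τt (cycleSum τgt Y τle k) μ := by
  set F := cycleFamily τt τgt Y τle N
  have hS := measurable_iSup_comap F (S := {.inr (.inr 0)}ᶜ)
  exact hindep.indepFun_of_measurable_iSup hmeas disjoint_compl_right
    (measurable_iSup_comap F (.inr (.inr 0)) (mem_singleton _))
    (measurable_cycleSum (Y := Y) (τle := τle) (τgt := τgt) (fun j => hS (.inl j) (by simp))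
      (fun j => hS (.inr (.inl j)) (by simp)) (hS (.inr (.inr 1)) (by simp)) k)

lemma indepFun_cycleIncrement_const (hindep : iIndepFun (cycleFamily τt τgt Y τle N) μ)
    (hmeas : ∀ i, Measurable (cycleFamily τt τgt Y τle N i)) (k : ℕ) :
    IndepFun N (fun ω => cycleIncrement ξ τt τgt Y τle (fun _ => k) ω) μ := by
  set F := cycleFamily τt τgt Y τle N
  have hS := measurable_iSup_comap F (S := {.inr (.inr 2)}ᶜ)
  -- the family only carries `N` cast to `ℝ`
  have hN : N = Nat.floor ∘ F (.inr (.inr 2)) := by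
    ext ω
    simp [F, cycleFamily]
  rw [hN]
  exact hindep.indepFun_of_measurable_iSup hmeas disjoint_compl_right
    (Nat.measurable_floor.comp (measurable_iSup_comap F (.inr (.inr 2)) (mem_singleton _)))
    (measurable_cycleIncrement_const (Y := Y) (τle := τle) (τt := τt) (τgt := τgt)
      (fun j => hS (.inl j) (by simp)) (fun j => hS (.inr (.inl j)) (by simp))
      (hS (.inr (.inr 0)) (by simp)) (hS (.inr (.inr 1)) (by simp)) k)

lemma integrable_cycleSum (hY : ∀ j, Integrable (Y j) μ) (hτle : ∀ j, Integrable (τle j) μ)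
    (hτgt : Integrable τgt μ) (k : ℕ) : Integrable (cycleSum τgt Y τle k) μ :=
  (integrable_finsetSum _ fun j _ => (hY j).sub (hτle j)).add ((hY k).sub hτgt)

lemma integrable_cycleIncrement_const (hY : ∀ j, Integrable (Y j) μ)
    (hτle : ∀ j, Integrable (τle j) μ) (hτgt : Integrable τgt μ) (hτt : Integrable τt μ)
    (hτtm : Measurable τt) (k : ℕ) :
    Integrable (fun ω => cycleIncrement ξ τt τgt Y τle (fun _ => k) ω) μ := by
  simp_rw [cycleIncrement_eq]
  exact ((hY 0).sub hτt).add
    ((integrable_cycleSum hY hτle hτgt k).indicator (hτtm measurableSet_Iic))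

lemma integral_cycleSum_succ (hY : ∀ j, Integrable (Y j) μ) (hτle : ∀ j, Integrable (τle j) μ)
    (hτgt : Integrable τgt μ) {y a : ℝ} (hEY : ∀ j, ∫ ω, Y j ω ∂μ = y)
    (hEτle : ∀ j, ∫ ω, τle j ω ∂μ = a) (m : ℕ) :
    ∫ ω, cycleSum τgt Y τle (m + 1) ω ∂μ = m * (y - a) + (y - ∫ ω, τgt ω ∂μ) := by
  have hsum : Integrable (fun ω => ∑ j ∈ Finset.Icc 1 m, (Y j ω - τle j ω)) μ :=
    integrable_finsetSum _ fun j _ => (hY j).sub (hτle j)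
  have hlast : Integrable (fun ω => Y (m + 1) ω - τgt ω) μ := (hY _).sub hτgt
  simp only [cycleSum, add_tsub_cancel_right]
  rw [integral_add hsum hlast,
    integral_finsetSum (f := fun j ω => Y j ω - τle j ω) _ fun j _ => (hY j).sub (hτle j),
    integral_sub (hY _) hτgt]
  simp [integral_sub (hY _) (hτle _), hEY, hEτle, mul_sub]

lemma integral_norm_cycleSum_le (hY : ∀ j, Integrable (Y j) μ)
    (hτle : ∀ j, Integrable (τle j) μ) (hτgt : Integrable τgt μ) {M : ℝ}
    (hYM : ∀ j, ∫ ω, ‖Y j ω‖ ∂μ ≤ M) (hτleM : ∀ j, ∫ ω, ‖τle j ω‖ ∂μ ≤ M)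
    (hτgtM : ∫ ω, ‖τgt ω‖ ∂μ ≤ M) (k : ℕ) :
    ∫ ω, ‖cycleSum τgt Y τle k ω‖ ∂μ ≤ 2 * (k + 1) * M := by
  have hM : 0 ≤ M := (integral_nonneg fun _ => norm_nonneg _).trans hτgtM
  have hint : ∀ j, Integrable (fun ω => ‖Y j ω‖ + ‖τle j ω‖) μ :=
    fun j => (hY j).norm.add (hτle j).norm
  have hsum : Integrable (fun ω => ∑ j ∈ Finset.Icc 1 (k - 1), (‖Y j ω‖ + ‖τle j ω‖)) μ :=
    integrable_finsetSum _ fun j _ => hint j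
  have hlast : Integrable (fun ω => ‖Y k ω‖ + ‖τgt ω‖) μ := (hY k).norm.add hτgt.norm
  calc ∫ ω, ‖cycleSum τgt Y τle k ω‖ ∂μ
      ≤ ∫ ω, (∑ j ∈ Finset.Icc 1 (k - 1), (‖Y j ω‖ + ‖τle j ω‖) + (‖Y k ω‖ + ‖τgt ω‖)) ∂μ :=
        integral_mono (integrable_cycleSum hY hτle hτgt k).norm (hsum.add hlast)
          fun ω => (norm_add_le _ _).trans (add_le_add ((norm_sum_le _ _).trans
            (Finset.sum_le_sum fun j _ => norm_sub_le _ _)) (norm_sub_le _ _))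
    _ = ∑ j ∈ Finset.Icc 1 (k - 1), (∫ ω, ‖Y j ω‖ ∂μ + ∫ ω, ‖τle j ω‖ ∂μ)
          + (∫ ω, ‖Y k ω‖ ∂μ + ∫ ω, ‖τgt ω‖ ∂μ) := by
      rw [integral_add hsum hlast, integral_finsetSum _ fun j _ => hint j,
        integral_add (hY k).norm hτgt.norm]
      simp only [integral_add (hY _).norm (hτle _).norm]
    _ ≤ ∑ j ∈ Finset.Icc 1 (k - 1), (M + M) + (M + M) := by
      gcongr with j <;> simp only [hYM, hτleM]
    _ ≤ 2 * (k + 1) * M := by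
      have hcard : ((k - 1 : ℕ) : ℝ) ≤ k := Nat.cast_le.mpr (Nat.sub_le k 1)
      simp only [Finset.sum_const, Nat.card_Icc, add_tsub_cancel_right, nsmul_eq_mul]
      nlinarith

lemma integral_cycleIncrement_const_succ (hY : ∀ j, Integrable (Y j) μ)
    (hτle : ∀ j, Integrable (τle j) μ) (hτgt : Integrable τgt μ) (hτt : Integrable τt μ)
    (hτtm : Measurable τt) {y a : ℝ} (hEY : ∀ j, ∫ ω, Y j ω ∂μ = y)
    (hEτle : ∀ j, ∫ ω, τle j ω ∂μ = a) {m : ℕ}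
    (hind : IndepFun τt (cycleSum τgt Y τle (m + 1)) μ) :
    ∫ ω, cycleIncrement ξ τt τgt Y τle (fun _ => m + 1) ω ∂μ
      = y - ∫ ω, τt ω ∂μ + μ.real (τt ⁻¹' Iic ξ) * (m * (y - a) + (y - ∫ ω, τgt ω ∂μ)) := by
  have hS := integrable_cycleSum hY hτle hτgt (m + 1)
  have hfirst : Integrable (fun ω => Y 0 ω - τt ω) μ := (hY 0).sub hτt
  simp_rw [cycleIncrement_eq]
  rw [integral_add hfirst (hS.indicator (hτtm measurableSet_Iic)),
    integral_sub (hY 0) hτt, hind.integral_indicator_preimage hτtm hS.1 measurableSet_Iic,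
    integral_cycleSum_succ hY hτle hτgt hEY hEτle, hEY 0]

lemma integral_norm_cycleIncrement_const_le (hY : ∀ j, Integrable (Y j) μ)
    (hτle : ∀ j, Integrable (τle j) μ) (hτgt : Integrable τgt μ) (hτt : Integrable τt μ)
    {M : ℝ} (hYM : ∀ j, ∫ ω, ‖Y j ω‖ ∂μ ≤ M) (hτleM : ∀ j, ∫ ω, ‖τle j ω‖ ∂μ ≤ M)
    (hτgtM : ∫ ω, ‖τgt ω‖ ∂μ ≤ M) (hτtM : ∫ ω, ‖τt ω‖ ∂μ ≤ M) (k : ℕ) :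
    ∫ ω, ‖cycleIncrement ξ τt τgt Y τle (fun _ => k) ω‖ ∂μ ≤ 2 * (k + 2) * M := by
  have hS := integrable_cycleSum hY hτle hτgt k
  have hfirst : Integrable (fun ω => ‖Y 0 ω‖ + ‖τt ω‖) μ := (hY 0).norm.add hτt.norm
  calc ∫ ω, ‖cycleIncrement ξ τt τgt Y τle (fun _ => k) ω‖ ∂μ
      ≤ ∫ ω, (‖Y 0 ω‖ + ‖τt ω‖ + ‖cycleSum τgt Y τle k ω‖) ∂μ := by
        refine integral_mono_of_nonneg (ae_of_all _ fun _ => norm_nonneg _)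
          (hfirst.add hS.norm) (ae_of_all _ fun ω => ?_)
        simp only [cycleIncrement_eq]
        exact (norm_add_le _ _).trans (add_le_add (norm_sub_le _ _)
          (norm_indicator_le_norm_self _ _))
    _ = ∫ ω, ‖Y 0 ω‖ ∂μ + ∫ ω, ‖τt ω‖ ∂μ + ∫ ω, ‖cycleSum τgt Y τle k ω‖ ∂μ := by
      rw [integral_add hfirst hS.norm, integral_add (hY 0).norm hτt.norm]
    _ ≤ M + M + 2 * (k + 1) * M :=
      add_le_add (add_le_add (hYM 0) hτtM)
        (integral_norm_cycleSum_le hY hτle hτgt hYM hτleM hτgtM k)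
    _ = 2 * (k + 2) * M := by ring

theorem integral_cycleIncrement_of_geometric (hτtm : Measurable τt) (hτgtm : Measurable τgt)
    (hYm : ∀ j, Measurable (Y j)) (hτlem : ∀ j, Measurable (τle j)) (hNm : Measurable N)
    (hindep : iIndepFun (cycleFamily τt τgt Y τle N) μ)
    (hY : ∀ j, Integrable (Y j) μ) (hτle : ∀ j, Integrable (τle j) μ)
    (hτgt : Integrable τgt μ) (hτt : Integrable τt μ) {y a M : ℝ}
    (hEY : ∀ j, ∫ ω, Y j ω ∂μ = y) (hEτle : ∀ j, ∫ ω, τle j ω ∂μ = a)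
    (hYM : ∀ j, ∫ ω, ‖Y j ω‖ ∂μ ≤ M) (hτleM : ∀ j, ∫ ω, ‖τle j ω‖ ∂μ ≤ M)
    (hτgtM : ∫ ω, ‖τgt ω‖ ∂μ ≤ M) (hτtM : ∫ ω, ‖τt ω‖ ∂μ ≤ M)
    {p : ℝ} (hp0 : 0 < p) (hp1 : p ≤ 1) (hN0 : μ.real (N ⁻¹' {0}) = 0)
    (hgeom : ∀ m, μ.real (N ⁻¹' {m + 1}) = (1 - p) ^ m * p) :
    ∫ ω, cycleIncrement ξ τt τgt Y τle N ω ∂μ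
      = μ.real (τt ⁻¹' Iic ξ) * (y - a) * (1 - p) / p
        + (y - ∫ ω, τt ω ∂μ + μ.real (τt ⁻¹' Iic ξ) * (y - ∫ ω, τgt ω ∂μ)) := by
  have hmeas := measurable_cycleFamily hτtm hτgtm hYm hτlem hNm
  have hweight : ∀ m, 0 ≤ (1 - p) ^ m * p :=
    fun m => mul_nonneg (pow_nonneg (by linarith) m) hp0.le
  have hsummable : Summable fun k => μ.real (N ⁻¹' {k}) *
      ∫ ω, ‖cycleIncrement ξ τt τgt Y τle (fun _ => k) ω‖ ∂μ := by
    rw [← summable_nat_add_iff 1]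
    refine Summable.of_nonneg_of_le (fun m => mul_nonneg measureReal_nonneg
      (integral_nonneg fun _ => norm_nonneg _)) (fun m => ?_)
      (hasSum_geometric_mul_affine hp0 hp1 (2 * M) (6 * M)).summable
    rw [hgeom]
    calc (1 - p) ^ m * p * ∫ ω, ‖cycleIncrement ξ τt τgt Y τle (fun _ => m + 1) ω‖ ∂μ
        ≤ (1 - p) ^ m * p * (2 * ((m + 1 : ℕ) + 2) * M) := mul_le_mul_of_nonneg_left
          (integral_norm_cycleIncrement_const_le hY hτle hτgt hτt hYM hτleM hτgtM hτtM _)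
          (hweight m)
      _ = (1 - p) ^ m * p * (2 * M * m + 6 * M) := by push_cast; ring
  have hsum := hasSum_integral_comp_of_indepFun hNm
    (integrable_cycleIncrement_const hY hτle hτgt hτt hτtm)
    (indepFun_cycleIncrement_const hindep hmeas) hsummable
  rw [← hasSum_nat_add_iff' 1] at hsum
  simp only [Finset.range_one, Finset.sum_singleton, hN0, zero_mul, sub_zero, hgeom] at hsum
  have hterms : ∀ m : ℕ,
      (1 - p) ^ m * p * ∫ ω, cycleIncrement ξ τt τgt Y τle (fun _ => m + 1) ω ∂μ
        = (1 - p) ^ m * p * (μ.real (τt ⁻¹' Iic ξ) * (y - a) * m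
          + (y - ∫ ω, τt ω ∂μ + μ.real (τt ⁻¹' Iic ξ) * (y - ∫ ω, τgt ω ∂μ))) := fun m => by
    rw [integral_cycleIncrement_const_succ hY hτle hτgt hτt hτtm hEY hEτle
      (indepFun_cycleSum hindep hmeas _)]
    ring
  simp only [hterms] at hsum
  exact hsum.unique (hasSum_geometric_mul_affine hp0 hp1 _ _)

theorem integral_cycleIncrement [IsProbabilityMeasure μ] (hτm : Measurable τ)
    (hτtm : Measurable τt) (hτgtm : Measurable τgt)
    (hYm : ∀ k, Measurable (Y k)) (hτlem : ∀ k, Measurable (τle k)) (hNm : Measurable N)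
    {p : ℝ} (hpdef : p = (μ {ω | ξ < τ ω}).toReal) (hp0 : 0 < p) (hp1 : p ≤ 1)
    (hYid : ∀ k, IdentDistrib (Y k) (Y 0) μ μ)
    (hτle : ∀ k, Measure.map (τle k) μ = Measure.map τ (μ[|{ω | τ ω ≤ ξ}]))
    (hτgt : Measure.map τgt μ = Measure.map τ (μ[|{ω | ξ < τ ω}]))
    (hN : ∀ k : ℕ, 1 ≤ k → μ {ω | N ω = k} = ENNReal.ofReal ((1 - p) ^ (k - 1) * p))
    (hindep : iIndepFun (cycleFamily τt τgt Y τle N) μ)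
    (hτ : Integrable τ μ) (hτt : Integrable τt μ) (hY0 : Integrable (Y 0) μ) :
    ∫ ω, cycleIncrement ξ τt τgt Y τle N ω ∂μ
      = ∫ ω, Y 0 ω ∂μ - ∫ ω, τt ω ∂μ
        + μ.real (τt ⁻¹' Iic ξ) * (∫ ω, Y 0 ω ∂μ - ∫ ω, τ ω ∂μ) / p := by
  set A := {ω | τ ω ≤ ξ}
  have hA : MeasurableSet A := hτm measurableSet_Iic
  have hAc : {ω | ξ < τ ω} = Aᶜ := by
    ext ω
    simp [A]
  rw [hAc] at hpdef hτgt
  have hτleid : ∀ j, IdentDistrib (τle j) τ μ μ[|A] :=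
    fun j => ⟨(hτlem j).aemeasurable, hτm.aemeasurable, hτle j⟩
  have hτgtid : IdentDistrib τgt τ μ μ[|Aᶜ] := ⟨hτgtm.aemeasurable, hτm.aemeasurable, hτgt⟩
  have hYi : ∀ j, Integrable (Y j) μ := fun j => (hYid j).integrable_iff.mpr hY0
  have hτlei : ∀ j, Integrable (τle j) μ := fun j => (hτleid j).integrable_iff.mpr (hτ.cond A)
  have hτgti : Integrable τgt μ := hτgtid.integrable_iff.mpr (hτ.cond Aᶜ)
  have htotal : (1 - p) * ∫ ω, τ ω ∂μ[|A] + p * ∫ ω, τ ω ∂μ[|Aᶜ] = ∫ ω, τ ω ∂μ := by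
    rw [hpdef, ← measureReal_def, ← measureReal_mul_integral_cond_add_compl hτ hA,
      probReal_compl_eq_one_sub hA, sub_sub_cancel]
  set M := ∫ ω, ‖Y 0 ω‖ ∂μ + ∫ ω, ‖τle 0 ω‖ ∂μ + ∫ ω, ‖τgt ω‖ ∂μ + ∫ ω, ‖τt ω‖ ∂μ
  have hnorm : ∀ f : Ω → ℝ, 0 ≤ ∫ ω, ‖f ω‖ ∂μ := fun f => integral_nonneg fun _ => norm_nonneg _
  have hYM : ∀ j, ∫ ω, ‖Y j ω‖ ∂μ ≤ M := fun j => by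
    rw [(hYid j).norm.integral_eq]
    linarith [hnorm (τle 0), hnorm τgt, hnorm τt]
  have hτleM : ∀ j, ∫ ω, ‖τle j ω‖ ∂μ ≤ M := fun j => by
    rw [((hτleid j).trans (hτleid 0).symm).norm.integral_eq]
    linarith [hnorm (Y 0), hnorm τgt, hnorm τt]
  obtain ⟨hN0, hgeom⟩ := measureReal_preimage_singleton_of_geometric hNm hp0 hp1 hN
  rw [integral_cycleIncrement_of_geometric hτtm hτgtm hYm hτlem hNm hindep hYi hτlei hτgti hτt
    (fun j => (hYid j).integral_eq) (fun j => (hτleid j).integral_eq) hYM hτleM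
    (by linarith [hnorm (Y 0), hnorm (τle 0), hnorm τt])
    (by linarith [hnorm (Y 0), hnorm (τle 0), hnorm τgt]) hp0 hp1 hN0 hgeom,
    hτgtid.integral_eq, ← htotal]
  field_simp
  ring

end Cycle

theorem cycleIncrement_mean_exponential_general
    {Ω : Type*} [MeasureSpace Ω] [IsProbabilityMeasure (ℙ : Measure Ω)]
    (ξ : ℝ) (hξ : 0 < ξ)
    (τ τt τgt : Ω → ℝ) (Y τle : ℕ → Ω → ℝ) (N : Ω → ℕ)
    (hτmeas : Measurable τ) (hτtmeas : Measurable τt) (hτgtmeas : Measurable τgt)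
    (hYmeas : ∀ k, Measurable (Y k)) (hτlemeas : ∀ k, Measurable (τle k))
    (hNmeas : Measurable N)
    (p : ℝ) (hpdef : p = (ℙ {ω | ξ < τ ω}).toReal) (hp0 : 0 < p) (hp1 : p < 1)
    (hYid : ∀ k, IdentDistrib (Y k) (Y 0) ℙ ℙ)
    (hτle : ∀ k, Measure.map (τle k) ℙ = Measure.map τ (ℙ[|{ω | τ ω ≤ ξ}]))
    (hτgt : Measure.map τgt ℙ = Measure.map τ (ℙ[|{ω | ξ < τ ω}]))
    (hN : ∀ k : ℕ, 1 ≤ k → ℙ {ω | N ω = k} = ENNReal.ofReal ((1 - p) ^ (k - 1) * p))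
    (hindep : iIndepFun (cycleFamily τt τgt Y τle N) ℙ)
    -- exponential distributions
    (lam₁ lam₂ β : ℝ) (hlam₁ : 0 < lam₁) (hlam₂ : 0 < lam₂) (hβ : 0 < β)
    (hτexp : Measure.map τ ℙ = expMeasure lam₁)
    (hτtexp : Measure.map τt ℙ = expMeasure lam₂)
    (hYexp : Measure.map (Y 0) ℙ = expMeasure β) :
    (∫ ω, cycleIncrement ξ τt τgt Y τle N ω ∂ℙ =
      Real.exp (lam₁ * ξ) *
        ((1 / β - 1 / lam₁) * (1 - Real.exp (-(lam₂ * ξ))) +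
          (1 / β - 1 / lam₂) * Real.exp (-(lam₁ * ξ)))) ∧
    ((∫ ω, cycleIncrement ξ τt τgt Y τle N ω ∂ℙ) < 0 ↔
      (1 / β - 1 / lam₁) * (1 - Real.exp (-(lam₂ * ξ))) +
        (1 / β - 1 / lam₂) * Real.exp (-(lam₁ * ξ)) < 0) := by
  have hτlaw : HasLaw τ (expMeasure lam₁) ℙ := ⟨hτmeas.aemeasurable, hτexp⟩
  have hτtlaw : HasLaw τt (expMeasure lam₂) ℙ := ⟨hτtmeas.aemeasurable, hτtexp⟩
  have hYlaw : HasLaw (Y 0) (expMeasure β) ℙ := ⟨(hYmeas 0).aemeasurable, hYexp⟩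
  have hp : p = exp (-(lam₁ * ξ)) := by
    rw [hpdef, ← measureReal_def, hτlaw.measureReal_eq (p := (ξ < ·)) measurableSet_Ioi]
    exact expMeasure_real_Ioi hlam₁ hξ.le
  have hq : (ℙ : Measure Ω).real (τt ⁻¹' Iic ξ) = 1 - exp (-(lam₂ * ξ)) := by
    change (ℙ : Measure Ω).real {ω | τt ω ≤ ξ} = _
    rw [hτtlaw.measureReal_eq (p := (· ≤ ξ)) measurableSet_Iic]
    exact expMeasure_real_Iic hlam₂ hξ.le
  have hmean : ∫ ω, cycleIncrement ξ τt τgt Y τle N ω ∂ℙ = exp (lam₁ * ξ) *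
      ((1 / β - 1 / lam₁) * (1 - exp (-(lam₂ * ξ))) + (1 / β - 1 / lam₂) * exp (-(lam₁ * ξ))) := by
    rw [integral_cycleIncrement hτmeas hτtmeas hτgtmeas hYmeas hτlemeas hNmeas hpdef hp0 hp1.le
      hYid hτle hτgt hN hindep (hτlaw.integrable_of_expMeasure hlam₁)
      (hτtlaw.integrable_of_expMeasure hlam₂) (hYlaw.integrable_of_expMeasure hβ),
      hYlaw.integral_of_expMeasure hβ, hτtlaw.integral_of_expMeasure hlam₂,
      hτlaw.integral_of_expMeasure hlam₁, hq, hp, ← inv_inv (exp (lam₁ * ξ)), ← exp_neg]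
    field_simp
    ring
  rw [hmean]
  exact ⟨rfl, fun h => neg_of_mul_neg_right h (exp_pos _).le, mul_neg_of_pos_of_neg (exp_pos _)⟩

/-- If moreover `τ ~ Exp(λ₁)`, `τ̃ ~ Exp(λ₂)` and the claims are
`Exp(β)`, then
`E X₁ = e^{λ₁ξ} [ (1/β − 1/λ₁)(1 − e^{−λ₂ξ}) + (1/β − 1/λ₂) e^{−λ₁ξ} ]`; in particular
the net profit condition `E X₁ < 0` holds iff
`(1/β − 1/λ₁)(1 − e^{−λ₂ξ}) + (1/β − 1/λ₂) e^{−λ₁ξ} < 0`. -/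
theorem cycleIncrement_mean_exponential
    {Ω : Type*} [MeasureSpace Ω] [IsProbabilityMeasure (ℙ : Measure Ω)]
    (ξ : ℝ) (hξ : 0 < ξ)
    (τ τt τgt : Ω → ℝ) (Y τle : ℕ → Ω → ℝ) (N : Ω → ℕ)
    (hτmeas : Measurable τ) (hτtmeas : Measurable τt) (hτgtmeas : Measurable τgt)
    (hYmeas : ∀ k, Measurable (Y k)) (hτlemeas : ∀ k, Measurable (τle k))
    (hNmeas : Measurable N)
    (hτpos : ∀ᵐ ω ∂ℙ, 0 < τ ω) (hτtpos : ∀ᵐ ω ∂ℙ, 0 < τt ω)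
    (p : ℝ) (hpdef : p = (ℙ {ω | ξ < τ ω}).toReal) (hp0 : 0 < p) (hp1 : p < 1)
    (hYid : ∀ k, IdentDistrib (Y k) (Y 0) ℙ ℙ) (hYnn : ∀ k, ∀ᵐ ω ∂ℙ, 0 ≤ Y k ω)
    (hτle : ∀ k, Measure.map (τle k) ℙ = Measure.map τ (ℙ[|{ω | τ ω ≤ ξ}]))
    (hτgt : Measure.map τgt ℙ = Measure.map τ (ℙ[|{ω | ξ < τ ω}]))
    (hN : ∀ k : ℕ, 1 ≤ k → ℙ {ω | N ω = k} = ENNReal.ofReal ((1 - p) ^ (k - 1) * p))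
    (hindep : iIndepFun (cycleFamily τt τgt Y τle N) ℙ)
    -- exponential distributions
    (lam₁ lam₂ β : ℝ) (hlam₁ : 0 < lam₁) (hlam₂ : 0 < lam₂) (hβ : 0 < β)
    (hτexp : Measure.map τ ℙ = expMeasure lam₁)
    (hτtexp : Measure.map τt ℙ = expMeasure lam₂)
    (hYexp : Measure.map (Y 0) ℙ = expMeasure β) :
    (∫ ω, cycleIncrement ξ τt τgt Y τle N ω ∂ℙ =
      Real.exp (lam₁ * ξ) *
        ((1 / β - 1 / lam₁) * (1 - Real.exp (-(lam₂ * ξ))) +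
          (1 / β - 1 / lam₂) * Real.exp (-(lam₁ * ξ)))) ∧
    ((∫ ω, cycleIncrement ξ τt τgt Y τle N ω ∂ℙ) < 0 ↔
      (1 / β - 1 / lam₁) * (1 - Real.exp (-(lam₂ * ξ))) +
        (1 / β - 1 / lam₂) * Real.exp (-(lam₁ * ξ)) < 0) :=
  cycleIncrement_mean_exponential_general ξ hξ τ τt τgt Y τle N hτmeas hτtmeas hτgtmeas hYmeas
    hτlemeas hNmeas p hpdef hp0 hp1 hYid hτle hτgt hN hindep lam₁ lam₂ β hlam₁ hlam₂ hβ hτexp hτtexp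
    hYexp
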